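/- Let q ≥ 2 be an integer and X, Y adjacent vertices in the infinite (q+1)-regular tree. Let βᵤⁿ be the uniform probability measure on the ball of radius n centered at u. Then W₁(β_Xⁿ, β_Yⁿ) = ((q-1)/(q+1-2q^(-n)))·(2n+1) for every integer n ≥ 0. -/

import Mathlib

/-- The uniform probability measure (as a density) on the ball of radius `n`
centered at `u` in a `(q+1)`-regular tree. -/
noncomputable def ballMeasure {V : Type*} (G : SimpleGraph V) (q n : ℕ) (u : V) : V → ℝ :=
  fun v => if G.dist u v ≤ n then
      ((q : ℝ) - 1) / ((q : ℝ) ^ (n + 1) + (q : ℝ) ^ n - 2)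
    else 0

/-- The set of total costs of transport plans between `μ` and `ν`, with cost
given by the graph distance. -/
def transportCosts {V : Type*} (G : SimpleGraph V) (μ ν : V → ℝ) : Set ℝ :=
  {c | ∃ π : V → V → ℝ, (∀ v w, 0 ≤ π v w) ∧
    (Function.support fun p : V × V => π p.1 p.2).Finite ∧
    (∀ v, ∑ᶠ w, π v w = μ v) ∧ (∀ w, ∑ᶠ v, π v w = ν w) ∧
    ∑ᶠ p : V × V, (G.dist p.1 p.2 : ℝ) * π p.1 p.2 = c}

open SimpleGraph

namespace TreeW1

variable {V : Type*} {G : SimpleGraph V}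

lemma mem_support_shortest (hc : G.Connected) {a b x : V} {p : G.Walk a b}
    (hp : p.length = G.dist a b) (hx : x ∈ p.support) :
    G.dist a x + G.dist x b = G.dist a b := by
  classical
  have h1 := SimpleGraph.dist_le (p.takeUntil x hx)
  have h2 := SimpleGraph.dist_le (p.dropUntil x hx)
  have h3 : (p.takeUntil x hx).length + (p.dropUntil x hx).length = p.length := by
    rw [← SimpleGraph.Walk.length_append, SimpleGraph.Walk.take_spec]
  have h4 := hc.dist_triangle (u := a) (v := x) (w := b)
  omega

lemma adj_dist_ne (hc : G.Connected) (ha : G.IsAcyclic) (u : V) {v w : V} (h : G.Adj v w) :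
    G.dist u v ≠ G.dist u w := by
  intro hd
  obtain ⟨p, hp, hpl⟩ := hc.exists_path_of_dist v u
  obtain ⟨r, hr, hrl⟩ := hc.exists_path_of_dist w u
  have hwp : w ∉ p.support := by
    intro hw
    have h5 := mem_support_shortest hc hpl hw
    have h1 : 0 < G.dist v w := hc.pos_dist_of_ne h.ne
    have h3 : G.dist w u = G.dist v u := by
      rw [SimpleGraph.dist_comm (u := w) (v := u), SimpleGraph.dist_comm (u := v) (v := u), hd]
    omega
  have hq : (SimpleGraph.Walk.cons h.symm p).IsPath := hp.cons hwp
  have heq := ha.path_unique ⟨_, hq⟩ ⟨r, hr⟩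
  have hlen : (SimpleGraph.Walk.cons h.symm p).length = r.length := by
    rw [show (SimpleGraph.Walk.cons h.symm p) = r from congrArg Subtype.val heq]
  rw [SimpleGraph.Walk.length_cons, hpl, hrl] at hlen
  rw [SimpleGraph.dist_comm (u := v) (v := u), SimpleGraph.dist_comm (u := w) (v := u)] at hlen
  omega

lemma adj_dist_cases (hc : G.Connected) (ha : G.IsAcyclic) (u : V) {v w : V} (h : G.Adj v w) :
    G.dist u w = G.dist u v + 1 ∨ G.dist u v = G.dist u w + 1 := by
  have h1 : G.dist u w ≤ G.dist u v + 1 := by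
    have := hc.dist_triangle (u := u) (v := v) (w := w)
    rwa [SimpleGraph.dist_eq_one_iff_adj.mpr h] at this
  have h2 : G.dist u v ≤ G.dist u w + 1 := by
    have := hc.dist_triangle (u := u) (v := w) (w := v)
    rwa [SimpleGraph.dist_eq_one_iff_adj.mpr h.symm] at this
  have h3 := adj_dist_ne hc ha u h
  omega

lemma exists_pred (hc : G.Connected) {u v : V} {k : ℕ} (hk : G.dist u v = k + 1) :
    ∃ p, G.Adj p v ∧ G.dist u p = k := by
  obtain ⟨r, hr, hrl⟩ := hc.exists_path_of_dist v u
  rw [SimpleGraph.dist_comm (u := v) (v := u), hk] at hrl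
  cases r with
  | nil => simp at hrl
  | @cons _ p0 _ hadj r' =>
    refine ⟨p0, hadj.symm, ?_⟩
    have h1 : G.dist p0 u ≤ r'.length := SimpleGraph.dist_le r'
    have h2 : r'.length + 1 = k + 1 := by
      simpa [SimpleGraph.Walk.length_cons] using hrl
    have h3 : G.dist u v ≤ G.dist u p0 + 1 := by
      have := hc.dist_triangle (u := u) (v := p0) (w := v)
      rwa [SimpleGraph.dist_eq_one_iff_adj.mpr hadj.symm] at this
    have h4 : G.dist u p0 = G.dist p0 u := SimpleGraph.dist_comm
    omega

lemma pred_unique (hc : G.Connected) (ha : G.IsAcyclic) {u v p₁ p₂ : V} {k : ℕ}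
    (h1 : G.Adj p₁ v) (h2 : G.Adj p₂ v) (hd : G.dist u v = k + 1)
    (hd1 : G.dist u p₁ = k) (hd2 : G.dist u p₂ = k) : p₁ = p₂ := by
  obtain ⟨q₁, hq₁, hl₁⟩ := hc.exists_path_of_dist p₁ u
  obtain ⟨q₂, hq₂, hl₂⟩ := hc.exists_path_of_dist p₂ u
  have hv₁ : v ∉ q₁.support := by
    intro hvv
    have h5 := mem_support_shortest hc hl₁ hvv
    have h6 : G.dist v u = k + 1 := by rwa [SimpleGraph.dist_comm]
    have h7 : G.dist p₁ u = k := by rwa [SimpleGraph.dist_comm]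
    omega
  have hv₂ : v ∉ q₂.support := by
    intro hvv
    have h5 := mem_support_shortest hc hl₂ hvv
    have h6 : G.dist v u = k + 1 := by rwa [SimpleGraph.dist_comm]
    have h7 : G.dist p₂ u = k := by rwa [SimpleGraph.dist_comm]
    omega
  have P1 : (SimpleGraph.Walk.cons h1.symm q₁).IsPath := hq₁.cons hv₁
  have P2 : (SimpleGraph.Walk.cons h2.symm q₂).IsPath := hq₂.cons hv₂
  have heq := ha.path_unique ⟨_, P1⟩ ⟨_, P2⟩
  have hsup : (SimpleGraph.Walk.cons h1.symm q₁).support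
      = (SimpleGraph.Walk.cons h2.symm q₂).support := by
    rw [show (SimpleGraph.Walk.cons h1.symm q₁) = (SimpleGraph.Walk.cons h2.symm q₂)
      from congrArg Subtype.val heq]
  rw [SimpleGraph.Walk.support_cons, SimpleGraph.Walk.support_cons,
    q₁.support_eq_cons, q₂.support_eq_cons] at hsup
  exact (List.cons.inj (List.cons.inj hsup).2).1


lemma crossing (hc : G.Connected) (ha : G.IsAcyclic) {X Y v w : V} (hXY : G.Adj X Y)
    (hvw : G.Adj v w) (hv : G.dist Y v = G.dist X v + 1)
    (hw : G.dist X w = G.dist Y w + 1) : v = X ∧ w = Y := by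
  rcases adj_dist_cases hc ha X hvw with hcase | hcase
  · -- dist X w = dist X v + 1
    by_cases hwY : w = Y
    · have h0 : G.dist Y w = 0 := by rw [hwY]; exact SimpleGraph.dist_self
      have h1 : G.dist X v = 0 := by omega
      exact ⟨(hc.dist_eq_zero_iff.mp h1).symm, hwY⟩
    · exfalso
      -- two distinct paths X → w
      obtain ⟨r1, hr1, hl1⟩ := hc.exists_path_of_dist Y w
      obtain ⟨r2, hr2, hl2⟩ := hc.exists_path_of_dist v X
      have hdYw : G.dist Y w = G.dist X v := by omega
      have hXr1 : X ∉ r1.support := by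
        intro hmem
        have h5 := mem_support_shortest hc hl1 hmem
        have h6 : 0 < G.dist Y X := hc.pos_dist_of_ne (G.ne_of_adj hXY).symm
        omega
      have P1 : (SimpleGraph.Walk.cons hXY r1).IsPath := hr1.cons hXr1
      have hwr2 : w ∉ r2.support := by
        intro hmem
        have h5 := mem_support_shortest hc hl2 hmem
        have h6 : G.dist w X = G.dist X w := SimpleGraph.dist_comm
        have h7 : 0 < G.dist v w := hc.pos_dist_of_ne hvw.ne
        have h8 : G.dist v X = G.dist X v := SimpleGraph.dist_comm
        omega
      have P2' : (SimpleGraph.Walk.cons hvw.symm r2).IsPath := hr2.cons hwr2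
      have P2 : (SimpleGraph.Walk.cons hvw.symm r2).reverse.IsPath := P2'.reverse
      have heq := ha.path_unique ⟨_, P1⟩ ⟨_, P2⟩
      have hsup : (SimpleGraph.Walk.cons hXY r1).support
          = (SimpleGraph.Walk.cons hvw.symm r2).reverse.support := by
        rw [show (SimpleGraph.Walk.cons hXY r1)
          = (SimpleGraph.Walk.cons hvw.symm r2).reverse from congrArg Subtype.val heq]
      have hY1 : Y ∈ (SimpleGraph.Walk.cons hXY r1).support := by
        rw [SimpleGraph.Walk.support_cons]
        exact List.mem_cons_of_mem _ r1.start_mem_support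
      have hY2 : Y ∉ (SimpleGraph.Walk.cons hvw.symm r2).reverse.support := by
        rw [SimpleGraph.Walk.support_reverse, List.mem_reverse,
          SimpleGraph.Walk.support_cons]
        intro hmem
        rcases List.mem_cons.mp hmem with h | h
        · exact hwY h.symm
        · have h5 := mem_support_shortest hc hl2 h
          have h6 : G.dist v Y = G.dist Y v := SimpleGraph.dist_comm
          have h9 : G.dist v X = G.dist X v := SimpleGraph.dist_comm
          have h7 : G.dist Y X = 1 := SimpleGraph.dist_eq_one_iff_adj.mpr hXY.symm
          have h8 : G.dist Y v ≤ G.dist Y X + G.dist X v := hc.dist_triangle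
          omega
      rw [hsup] at hY1
      exact hY2 hY1
  · -- dist X v = dist X w + 1, contradiction via Y
    exfalso
    have h1 : G.dist Y v ≤ G.dist Y w + 1 := by
      have := hc.dist_triangle (u := Y) (v := w) (w := v)
      rwa [SimpleGraph.dist_eq_one_iff_adj.mpr hvw.symm] at this
    omega


lemma side_trichotomy (hc : G.Connected) (ha : G.IsAcyclic) {X Y : V} (hXY : G.Adj X Y)
    (v : V) : G.dist Y v = G.dist X v + 1 ∨ G.dist X v = G.dist Y v + 1 := by
  rcases adj_dist_cases hc ha v hXY with h | h
  · left
    rw [SimpleGraph.dist_comm (u := X) (v := v), SimpleGraph.dist_comm (u := Y) (v := v)]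
    exact h
  · right
    rw [SimpleGraph.dist_comm (u := X) (v := v), SimpleGraph.dist_comm (u := Y) (v := v)]
    exact h

/-- Signed distance potential across the edge `X—Y`. -/
noncomputable def pot (G : SimpleGraph V) (X Y : V) : V → ℤ := fun v =>
  if G.dist X v < G.dist Y v then (G.dist X v : ℤ) else -(1 + (G.dist Y v : ℤ))

lemma pot_lip (hc : G.Connected) (ha : G.IsAcyclic) {X Y : V} (hXY : G.Adj X Y)
    {v w : V} (h : G.Adj v w) : pot G X Y v - pot G X Y w ≤ 1 := by
  have hdX : G.dist X w ≤ G.dist X v + 1 ∧ G.dist X v ≤ G.dist X w + 1 := by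
    rcases adj_dist_cases hc ha X h with h' | h' <;> omega
  have hdY : G.dist Y w ≤ G.dist Y v + 1 ∧ G.dist Y v ≤ G.dist Y w + 1 := by
    rcases adj_dist_cases hc ha Y h with h' | h' <;> omega
  rcases side_trichotomy hc ha hXY v with hv | hv <;>
    rcases side_trichotomy hc ha hXY w with hw | hw
  · rw [pot, pot, if_pos (by omega), if_pos (by omega)]
    omega
  · -- v on X-side, w on Y-side: crossing edge
    obtain ⟨hvX, hwY⟩ := crossing hc ha hXY h hv hw
    subst hvX; subst hwY
    rw [pot, pot]
    simp [SimpleGraph.dist_self, SimpleGraph.dist_eq_one_iff_adj.mpr hXY,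
      SimpleGraph.dist_eq_one_iff_adj.mpr hXY.symm]
  · rw [pot, pot, if_neg (by omega), if_pos (by omega)]
    omega
  · rw [pot, pot, if_neg (by omega), if_neg (by omega)]
    omega

lemma pot_walk_bound (hc : G.Connected) (ha : G.IsAcyclic) {X Y : V} (hXY : G.Adj X Y)
    {a b : V} (p : G.Walk a b) : pot G X Y a - pot G X Y b ≤ (p.length : ℤ) := by
  induction p with
  | nil => simp
  | cons hadj q ih =>
    have := pot_lip hc ha hXY hadj
    rw [SimpleGraph.Walk.length_cons]
    push_cast
    omega

lemma pot_dist_bound (hc : G.Connected) (ha : G.IsAcyclic) {X Y : V} (hXY : G.Adj X Y)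
    (a b : V) : pot G X Y a - pot G X Y b ≤ (G.dist a b : ℤ) := by
  obtain ⟨p, _, hl⟩ := hc.exists_path_of_dist a b
  rw [← hl]
  exact pot_walk_bound hc ha hXY p


open Classical in
/-- The neighbor of `v` one step closer to `B` (junk value if none exists). -/
noncomputable def predt (G : SimpleGraph V) (B v : V) : V :=
  if h : ∃ p, G.Adj p v ∧ G.dist B p + 1 = G.dist B v then h.choose else v

lemma predt_spec (hc : G.Connected) {B v : V} {k : ℕ} (h : G.dist B v = k + 1) :
    G.Adj (predt G B v) v ∧ G.dist B (predt G B v) = k := by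
  obtain ⟨p, hp1, hp2⟩ := exists_pred hc h
  have hex : ∃ p, G.Adj p v ∧ G.dist B p + 1 = G.dist B v := ⟨p, hp1, by omega⟩
  rw [predt, dif_pos hex]
  obtain ⟨h1, h2⟩ := hex.choose_spec
  exact ⟨h1, by omega⟩

lemma predt_eq (hc : G.Connected) (ha : G.IsAcyclic) {B v p : V} {k : ℕ}
    (h : G.dist B v = k + 1) (hp : G.Adj p v) (hd : G.dist B p = k) :
    p = predt G B v := by
  obtain ⟨h1, h2⟩ := predt_spec hc h
  exact pred_unique hc ha hp h1 h hd h2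

lemma nbr_fin {q : ℕ} (hdeg : ∀ v : V, (G.neighborSet v).ncard = q + 1) (v : V) :
    (G.neighborSet v).Finite := by
  by_contra h
  have h2 := Set.Infinite.ncard (s := G.neighborSet v) (by simpa using h)
  rw [hdeg v] at h2
  omega

/-- The sphere of radius `k` about `A` on the `A`-side of the edge `A—B`. -/
def sph (G : SimpleGraph V) (A B : V) (k : ℕ) : Set V :=
  {v | G.dist A v = k ∧ G.dist B v = k + 1}

lemma sph_zero (hc : G.Connected) {A B : V} (hAB : G.Adj A B) : sph G A B 0 = {A} := by
  ext v
  simp only [sph, Set.mem_setOf_eq, Set.mem_singleton_iff]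
  constructor
  · rintro ⟨h1, -⟩
    exact (hc.dist_eq_zero_iff.mp h1).symm
  · rintro rfl
    exact ⟨SimpleGraph.dist_self, SimpleGraph.dist_eq_one_iff_adj.mpr hAB.symm⟩

lemma sph_count (hc : G.Connected) (ha : G.IsAcyclic) {q : ℕ}
    (hdeg : ∀ v : V, (G.neighborSet v).ncard = q + 1) {A B : V} (hAB : G.Adj A B) (k : ℕ) :
    (sph G A B k).Finite ∧ (sph G A B k).ncard = q ^ k := by
  classical
  induction k with
  | zero =>
    rw [sph_zero hc hAB]
    simp
  | succ k ih =>
    obtain ⟨hfin, hcard⟩ := ih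
    set sk : Finset V := hfin.toFinset with hsk
    set piece : V → Finset V := fun v => ((nbr_fin hdeg v).toFinset).erase (predt G B v)
      with hpiece
    -- each element of a piece lies in the next sphere
    have hsub : ∀ v ∈ sph G A B k, ∀ w ∈ piece v, w ∈ sph G A B (k + 1) := by
      intro v hv w hw
      obtain ⟨hd1, hd2⟩ := hv
      simp only [hpiece, Finset.mem_erase, Set.Finite.mem_toFinset,
        SimpleGraph.mem_neighborSet] at hw
      obtain ⟨hwp, hadj⟩ := hw
      have hBw : G.dist B w = k + 2 := by
        rcases adj_dist_cases hc ha B hadj with h' | h'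
        · omega
        · exfalso
          exact hwp (predt_eq hc ha hd2 hadj.symm (by omega))
      have hAw : G.dist A w = k + 1 := by
        have h1 : G.dist B w ≤ G.dist B A + G.dist A w := hc.dist_triangle
        have h1' : G.dist B A = 1 := SimpleGraph.dist_eq_one_iff_adj.mpr hAB.symm
        have h2 : G.dist A w ≤ G.dist A v + G.dist v w := hc.dist_triangle
        have h2' : G.dist v w = 1 := SimpleGraph.dist_eq_one_iff_adj.mpr hadj
        omega
      exact ⟨hAw, hBw⟩
    -- each element of the next sphere comes from a unique piece
    have hparent : ∀ w ∈ sph G A B (k + 1),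
        predt G B w ∈ sph G A B k ∧ w ∈ piece (predt G B w) := by
      intro w hw
      obtain ⟨hd1, hd2⟩ := hw
      obtain ⟨hadj, hdp⟩ := predt_spec hc (k := k + 1) hd2
      set v := predt G B w with hv
      have hAv : G.dist A v = k := by
        rcases adj_dist_cases hc ha A hadj.symm with h' | h'
        · -- dist A v = dist A w + 1 = k + 2 : crossing contradiction
          exfalso
          obtain ⟨hwA, -⟩ := crossing hc ha hAB hadj.symm (by omega) (by omega)
          rw [hwA] at hd1
          simp [SimpleGraph.dist_self] at hd1
        · omega
      refine ⟨⟨hAv, hdp⟩, ?_⟩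
      simp only [hpiece, Finset.mem_erase, Set.Finite.mem_toFinset,
        SimpleGraph.mem_neighborSet]
      have hdpv : G.dist B (predt G B v) = k := by
        rcases (predt_spec hc (k := k) hdp) with ⟨-, h2⟩
        exact h2
      constructor
      · intro hcontra
        rw [← hcontra] at hdpv
        omega
      · exact hadj
    have huniq : ∀ w ∈ sph G A B (k + 1), ∀ v ∈ sph G A B k, w ∈ piece v →
        v = predt G B w := by
      intro w hw v hv hwp
      simp only [hpiece, Finset.mem_erase, Set.Finite.mem_toFinset,
        SimpleGraph.mem_neighborSet] at hwp
      exact predt_eq hc ha hw.2 hwp.2 hv.2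
    have hset : sph G A B (k + 1) = ↑(sk.biUnion piece) := by
      ext w
      simp only [Finset.coe_biUnion, Set.mem_iUnion, Finset.mem_coe,
        Set.Finite.mem_toFinset, hsk]
      constructor
      · intro hw
        exact ⟨predt G B w, (hparent w hw).1, (hparent w hw).2⟩
      · rintro ⟨v, hv, hw⟩
        exact hsub v hv w hw
    have hdisj : ∀ v ∈ sk, ∀ v' ∈ sk, v ≠ v' → Disjoint (piece v) (piece v') := by
      intro v hv v' hv' hne
      rw [Set.Finite.mem_toFinset] at hv hv'
      rw [Finset.disjoint_left]
      intro w hw hw'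
      have h1 := huniq w (hsub v hv w hw) v hv hw
      have h2 := huniq w (hsub v hv w hw) v' hv' hw'
      exact hne (h1.trans h2.symm)
    have hpcard : ∀ v ∈ sk, (piece v).card = q := by
      intro v hv
      rw [Set.Finite.mem_toFinset] at hv
      have hmem : predt G B v ∈ (nbr_fin hdeg v).toFinset := by
        rw [Set.Finite.mem_toFinset, SimpleGraph.mem_neighborSet]
        exact ((predt_spec hc hv.2).1).symm
      rw [hpiece]
      simp only []
      rw [Finset.card_erase_of_mem hmem, ← Set.ncard_eq_toFinset_card _ (nbr_fin hdeg v),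
        hdeg v]
      omega
    have hcard2 : (sk.biUnion piece).card = q ^ (k + 1) := by
      rw [Finset.card_biUnion hdisj, Finset.sum_congr rfl hpcard, Finset.sum_const,
        smul_eq_mul, ← Set.ncard_eq_toFinset_card _ hfin, hcard]
      ring
    refine ⟨hset ▸ (sk.biUnion piece).finite_toSet, ?_⟩
    rw [hset, Set.ncard_coe_finset, hcard2]


lemma sphere_fin (hc : G.Connected) (ha : G.IsAcyclic) {q : ℕ}
    (hdeg : ∀ v : V, (G.neighborSet v).ncard = q + 1) {A B : V} (hAB : G.Adj A B) (k : ℕ) :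
    {v : V | G.dist A v = k}.Finite := by
  have hsub : {v : V | G.dist A v = k} ⊆
      sph G A B k ∪ (⋃ j ∈ Set.Iio k, sph G B A j) := by
    intro v hv
    simp only [Set.mem_setOf_eq] at hv
    rcases side_trichotomy hc ha hAB v with h | h
    · exact Set.mem_union_left _ ⟨hv, by omega⟩
    · right
      have hk : 1 ≤ k := by
        by_contra hk
        have : k = 0 := by omega
        subst this
        omega
      refine Set.mem_biUnion (show k - 1 ∈ Set.Iio k by simp; omega) ?_
      constructor <;> omega
  refine Set.Finite.subset (Set.Finite.union (sph_count hc ha hdeg hAB k).1 ?_) hsub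
  exact Set.Finite.biUnion (Set.finite_Iio k) fun j _ => (sph_count hc ha hdeg hAB.symm j).1

lemma ball_fin (hc : G.Connected) (ha : G.IsAcyclic) {q : ℕ}
    (hdeg : ∀ v : V, (G.neighborSet v).ncard = q + 1) {A B : V} (hAB : G.Adj A B) (n : ℕ) :
    {v : V | G.dist A v ≤ n}.Finite := by
  have : {v : V | G.dist A v ≤ n} ⊆ ⋃ k ∈ Set.Iic n, {v : V | G.dist A v = k} := by
    intro v hv
    exact Set.mem_biUnion hv rfl
  exact Set.Finite.subset
    (Set.Finite.biUnion (Set.finite_Iic n) fun k _ => sphere_fin hc ha hdeg hAB k) this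

lemma ball_diff (hc : G.Connected) (ha : G.IsAcyclic) {A B : V} (hAB : G.Adj A B) (n : ℕ) :
    {v : V | G.dist A v ≤ n} \ {v : V | G.dist B v ≤ n} = sph G A B n := by
  ext v
  simp only [Set.mem_diff, Set.mem_setOf_eq, sph]
  constructor
  · rintro ⟨h1, h2⟩
    rcases side_trichotomy hc ha hAB v with h | h <;> omega
  · rintro ⟨h1, h2⟩
    omega

/-- Distance between points on the two opposite spheres. -/
lemma sph_dist (hc : G.Connected) (ha : G.IsAcyclic) {A B : V} (hAB : G.Adj A B) {n : ℕ}
    {a b : V} (hb : a ∈ sph G A B n) (hw : b ∈ sph G B A n) :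
    G.dist a b = 2 * n + 1 := by
  obtain ⟨ha1, ha2⟩ := hb
  obtain ⟨hb1, hb2⟩ := hw
  have hub : G.dist a b ≤ 2 * n + 1 := by
    have h1 : G.dist a b ≤ G.dist a A + G.dist A b := hc.dist_triangle
    have h2 : G.dist a A = G.dist A a := SimpleGraph.dist_comm
    have h3 : G.dist A b = n + 1 := hb2
    omega
  have hlb : (2 * n + 1 : ℤ) ≤ (G.dist a b : ℤ) := by
    have h1 := pot_dist_bound hc ha hAB a b
    have h2 : pot G A B a = (n : ℤ) := by
      rw [pot, if_pos (by omega)]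
      rw [ha1]
    have h3 : pot G A B b = -(1 + (n : ℤ)) := by
      rw [pot, if_neg (by omega)]
      rw [hb1]
    rw [h2, h3] at h1
    omega
  omega

end TreeW1

open TreeW1

theorem stmt_16 {V : Type*} (G : SimpleGraph V) (q : ℕ) (hq : 2 ≤ q)
    (hconn : G.Connected) (hacyc : G.IsAcyclic)
    (hdeg : ∀ v : V, (G.neighborSet v).ncard = q + 1)
    (X Y : V) (hXY : G.Adj X Y) (n : ℕ) :
    IsLeast (transportCosts G (ballMeasure G q n X) (ballMeasure G q n Y))
      ((((q : ℝ) - 1) / ((q : ℝ) + 1 - 2 * (q : ℝ) ^ (-(n : ℤ)))) * (2 * n + 1)) := by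
  classical
  have hc := hconn
  have ha := hacyc
  set m : ℝ := ((q : ℝ) - 1) / ((q : ℝ) ^ (n + 1) + (q : ℝ) ^ n - 2) with hm
  have hq2 : (2 : ℝ) ≤ (q : ℝ) := by exact_mod_cast hq
  have hqn1 : (1 : ℝ) ≤ (q : ℝ) ^ n := one_le_pow₀ (by linarith)
  have hD : 0 < (q : ℝ) ^ (n + 1) + (q : ℝ) ^ n - 2 := by
    have h1 : (q : ℝ) ^ (n + 1) = (q : ℝ) ^ n * (q : ℝ) := by ring
    nlinarith
  have hm_pos : 0 < m := by
    rw [hm]; exact div_pos (by linarith) hD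
  have hqn0 : ((q : ℝ) ^ n) ≠ 0 := by positivity
  have hball : ∀ u v : V, ballMeasure G q n u v = if G.dist u v ≤ n then m else 0 := by
    intro u v; rw [hm]; rfl
  have hRHS : (((q : ℝ) - 1) / ((q : ℝ) + 1 - 2 * (q : ℝ) ^ (-(n : ℤ)))) * (2 * (n : ℝ) + 1)
      = m * (q : ℝ) ^ n * (2 * (n : ℝ) + 1) := by
    have hz : (q : ℝ) ^ (-(n : ℤ)) = ((q : ℝ) ^ n)⁻¹ := by
      rw [zpow_neg, zpow_natCast]
    have hden : (q : ℝ) + 1 - 2 * ((q : ℝ) ^ n)⁻¹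
        = ((q : ℝ) ^ (n + 1) + (q : ℝ) ^ n - 2) / ((q : ℝ) ^ n) := by
      field_simp
      ring
    rw [hz, hden, div_div_eq_mul_div, hm]
    ring
  rw [hRHS]
  -- spheres
  have hSXc := sph_count hc ha hdeg hXY n
  have hSYc := sph_count hc ha hdeg hXY.symm n
  set sX : Finset V := hSXc.1.toFinset with hsX
  set sY : Finset V := hSYc.1.toFinset with hsY
  have hsXcard : sX.card = q ^ n := by
    rw [hsX, ← Set.ncard_eq_toFinset_card _ hSXc.1, hSXc.2]
  have hsYcard : sY.card = q ^ n := by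
    rw [hsY, ← Set.ncard_eq_toFinset_card _ hSYc.1, hSYc.2]
  have hmemX : ∀ v, v ∈ sX ↔ (G.dist X v = n ∧ G.dist Y v = n + 1) := by
    intro v; rw [hsX, Set.Finite.mem_toFinset]; exact Iff.rfl
  have hmemY : ∀ v, v ∈ sY ↔ (G.dist Y v = n ∧ G.dist X v = n + 1) := by
    intro v; rw [hsY, Set.Finite.mem_toFinset]; exact Iff.rfl
  have hXYdisj : ∀ v, v ∈ sX → v ∉ sY := by
    intro v hv hw
    rw [hmemX] at hv; rw [hmemY] at hw; omega
  set e := Finset.equivOfCardEq (hsXcard.trans hsYcard.symm) with he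
  set f : V → V := fun v => if h : v ∈ sX then (e ⟨v, h⟩ : V) else v with hf
  set g : V → V := fun w => if h : w ∈ sY then (e.symm ⟨w, h⟩ : V) else w with hg
  have hfmem : ∀ v, v ∈ sX → f v ∈ sY := by
    intro v h; rw [hf]; simp only [dif_pos h]; exact (e ⟨v, h⟩).2
  have hgmem : ∀ w, w ∈ sY → g w ∈ sX := by
    intro w h; rw [hg]; simp only [dif_pos h]; exact (e.symm ⟨w, h⟩).2
  have hgf : ∀ v, ∀ h : v ∈ sX, g (f v) = v := by
    intro v h
    rw [hf]; simp only [dif_pos h]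
    rw [hg]; simp only [dif_pos (e ⟨v, h⟩).2]
    rw [show (⟨(e ⟨v, h⟩ : V), (e ⟨v, h⟩).2⟩ : {x // x ∈ sY}) = e ⟨v, h⟩ from rfl,
      Equiv.symm_apply_apply]
  have hfg : ∀ w, ∀ h : w ∈ sY, f (g w) = w := by
    intro w h
    rw [hg]; simp only [dif_pos h]
    rw [hf]; simp only [dif_pos (e.symm ⟨w, h⟩).2]
    rw [show (⟨(e.symm ⟨w, h⟩ : V), (e.symm ⟨w, h⟩).2⟩ : {x // x ∈ sX}) = e.symm ⟨w, h⟩ from rfl,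
      Equiv.apply_symm_apply]
  have hfid : ∀ v, v ∉ sX → f v = v := by
    intro v h; rw [hf]; simp only [dif_neg h]
  have hgid : ∀ w, w ∉ sY → g w = w := by
    intro w h; rw [hg]; simp only [dif_neg h]
  have hfne : ∀ v, v ∈ sX → f v ≠ v := by
    intro v h heq
    exact hXYdisj v h (heq ▸ hfmem v h)
  -- balls
  have hBXfin := ball_fin hc ha hdeg hXY n
  have hBYfin := ball_fin hc ha hdeg hXY.symm n
  set BX : Finset V := hBXfin.toFinset with hBX
  set BY : Finset V := hBYfin.toFinset with hBY
  have hmemBX : ∀ v, v ∈ BX ↔ G.dist X v ≤ n := by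
    intro v; rw [hBX, Set.Finite.mem_toFinset]; exact Iff.rfl
  have hmemBY : ∀ v, v ∈ BY ↔ G.dist Y v ≤ n := by
    intro v; rw [hBY, Set.Finite.mem_toFinset]; exact Iff.rfl
  -- the transport plan
  set π : V → V → ℝ := fun v w =>
    if v = w ∧ G.dist X v ≤ n ∧ G.dist Y v ≤ n then m
    else if v ∈ sX ∧ w = f v then m else 0 with hπ
  have hsX_mem : ∀ v, v ∈ sX → G.dist X v = n ∧ G.dist Y v = n + 1 := fun v h => (hmemX v).mp h
  have hev1 : ∀ v w, (v = w ∧ G.dist X v ≤ n ∧ G.dist Y v ≤ n) → π v w = m := by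
    intro v w h; simp only [hπ]; rw [if_pos h]
  have hev2 : ∀ v w, ¬(v = w ∧ G.dist X v ≤ n ∧ G.dist Y v ≤ n) → (v ∈ sX ∧ w = f v) →
      π v w = m := by
    intro v w h h'; simp only [hπ]; rw [if_neg h, if_pos h']
  have hev0 : ∀ v w, ¬(v = w ∧ G.dist X v ≤ n ∧ G.dist Y v ≤ n) → ¬(v ∈ sX ∧ w = f v) →
      π v w = 0 := by
    intro v w h h'; simp only [hπ]; rw [if_neg h, if_neg h']
  -- rows
  have hrow : ∀ v, ∑ᶠ w, π v w = ballMeasure G q n X v := by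
    intro v
    have hsub : (Function.support fun w => π v w) ⊆ (({v, f v} : Finset V) : Set V) := by
      intro w hw
      simp only [Function.mem_support, hπ] at hw
      by_cases h1 : v = w ∧ G.dist X v ≤ n ∧ G.dist Y v ≤ n
      · simp [← h1.1]
      · rw [if_neg h1] at hw
        by_cases h2 : v ∈ sX ∧ w = f v
        · simp [h2.2]
        · rw [if_neg h2] at hw; exact absurd rfl hw
    rw [finsum_eq_sum_of_support_subset _ hsub, hball]
    by_cases h1 : G.dist X v ≤ n
    · by_cases h2 : G.dist Y v ≤ n
      · have hvnot : v ∉ sX := by rw [hmemX]; omega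
        rw [hfid v hvnot, Finset.insert_eq_self.mpr (Finset.mem_singleton_self v),
          Finset.sum_singleton, if_pos h1, hev1 v v ⟨rfl, h1, h2⟩]
      · have hvin : v ∈ sX := by
          rw [hmemX]
          have ht1 : G.dist Y v ≤ G.dist Y X + G.dist X v := hc.dist_triangle
          have ht2 : G.dist X v ≤ G.dist X Y + G.dist Y v := hc.dist_triangle
          have ht3 : G.dist Y X = 1 := SimpleGraph.dist_eq_one_iff_adj.mpr hXY.symm
          have ht4 : G.dist X Y = 1 := SimpleGraph.dist_eq_one_iff_adj.mpr hXY
          omega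
        rw [Finset.sum_pair (hfne v hvin).symm, if_pos h1,
          hev0 v v (by rintro ⟨-, -, h⟩; omega) (by rintro ⟨-, h⟩; exact hfne v hvin h.symm),
          hev2 v (f v) (by rintro ⟨h, -⟩; exact hfne v hvin h.symm) ⟨hvin, rfl⟩]
        ring
    · have hvnot : v ∉ sX := by rw [hmemX]; omega
      rw [hfid v hvnot, Finset.insert_eq_self.mpr (Finset.mem_singleton_self v),
        Finset.sum_singleton, if_neg h1,
        hev0 v v (by rintro ⟨-, h, -⟩; omega) (by rintro ⟨h, -⟩; exact hvnot h)]
  -- columns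
  have hcol : ∀ w, ∑ᶠ v, π v w = ballMeasure G q n Y w := by
    intro w
    have hsub : (Function.support fun v => π v w) ⊆ (({w, g w} : Finset V) : Set V) := by
      intro v hv
      simp only [Function.mem_support, hπ] at hv
      by_cases h1 : v = w ∧ G.dist X v ≤ n ∧ G.dist Y v ≤ n
      · simp [h1.1]
      · rw [if_neg h1] at hv
        by_cases h2 : v ∈ sX ∧ w = f v
        · have : g w = v := by rw [h2.2, hgf v h2.1]
          simp [← this]
        · rw [if_neg h2] at hv; exact absurd rfl hv
    rw [finsum_eq_sum_of_support_subset _ hsub, hball]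
    by_cases h1 : G.dist Y w ≤ n
    · by_cases h2 : G.dist X w ≤ n
      · have hwnot : w ∉ sY := by rw [hmemY]; omega
        rw [hgid w hwnot, Finset.insert_eq_self.mpr (Finset.mem_singleton_self w),
          Finset.sum_singleton, if_pos h1, hev1 w w ⟨rfl, h2, h1⟩]
      · have hwin : w ∈ sY := by
          rw [hmemY]
          have ht1 : G.dist Y w ≤ G.dist Y X + G.dist X w := hc.dist_triangle
          have ht2 : G.dist X w ≤ G.dist X Y + G.dist Y w := hc.dist_triangle
          have ht3 : G.dist Y X = 1 := SimpleGraph.dist_eq_one_iff_adj.mpr hXY.symm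
          have ht4 : G.dist X Y = 1 := SimpleGraph.dist_eq_one_iff_adj.mpr hXY
          omega
        have hgw : g w ≠ w := by
          intro heq
          exact hXYdisj w (heq ▸ hgmem w hwin) hwin
        rw [Finset.sum_pair (Ne.symm hgw), if_pos h1,
          hev0 w w (by rintro ⟨-, hx, -⟩; exact h2 hx) (by rintro ⟨hws, -⟩; exact hXYdisj w hws hwin),
          hev2 (g w) w (by rintro ⟨heq, -⟩; exact hgw heq) ⟨hgmem w hwin, (hfg w hwin).symm⟩]
        ring
    · have hwnot : w ∉ sY := by rw [hmemY]; omega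
      rw [hgid w hwnot, Finset.insert_eq_self.mpr (Finset.mem_singleton_self w),
        Finset.sum_singleton, if_neg h1,
        hev0 w w (by rintro ⟨-, -, hy⟩; omega) (by
          rintro ⟨hws, hwf⟩
          exact hXYdisj w hws (hwf ▸ hfmem w hws))]
  -- support of the plan
  set T : Finset (V × V) := ((BX ∩ BY).image fun v => (v, v)) ∪ sX.image fun v => (v, f v)
    with hT
  have hsupp : ∀ v w, π v w ≠ 0 → (v, w) ∈ T := by
    intro v w hne
    by_cases h1 : v = w ∧ G.dist X v ≤ n ∧ G.dist Y v ≤ n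
    · refine Finset.mem_union_left _ (Finset.mem_image.mpr ⟨v, ?_, ?_⟩)
      · exact Finset.mem_inter.mpr ⟨(hmemBX v).mpr h1.2.1, (hmemBY v).mpr h1.2.2⟩
      · rw [h1.1]
    · by_cases h2 : v ∈ sX ∧ w = f v
      · exact Finset.mem_union_right _ (Finset.mem_image.mpr ⟨v, h2.1, by rw [h2.2]⟩)
      · exact absurd (hev0 v w h1 h2) hne
  constructor
  · -- membership : our plan achieves the value
    refine ⟨π, ?_, ?_, hrow, hcol, ?_⟩
    · intro v w
      simp only [hπ]
      split_ifs <;> first | exact hm_pos.le | exact le_refl 0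
    · exact Set.Finite.subset T.finite_toSet fun p hp => hsupp p.1 p.2 hp
    · have hcsub : (Function.support fun p : V × V => (G.dist p.1 p.2 : ℝ) * π p.1 p.2)
          ⊆ (T : Set (V × V)) := by
        intro p hp
        simp only [Function.mem_support] at hp
        exact hsupp p.1 p.2 fun h0 => hp (by rw [h0, mul_zero])
      rw [finsum_eq_sum_of_support_subset _ hcsub]
      have hdisjT : Disjoint ((BX ∩ BY).image fun v => (v, v)) (sX.image fun v => (v, f v)) := by
        rw [Finset.disjoint_left]
        rintro p hp1 hp2
        obtain ⟨a, _, rfl⟩ := Finset.mem_image.mp hp1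
        obtain ⟨b, hb', hbe⟩ := Finset.mem_image.mp hp2
        obtain ⟨h1, h2⟩ := Prod.mk.injEq .. ▸ hbe
        exact hfne b hb' (h2.trans h1.symm ▸ (h2.trans h1.symm))
      rw [hT, Finset.sum_union hdisjT]
      have hz1 : ∑ p ∈ (BX ∩ BY).image (fun v => (v, v)),
          (G.dist p.1 p.2 : ℝ) * π p.1 p.2 = 0 := by
        apply Finset.sum_eq_zero
        intro p hp
        obtain ⟨a, -, rfl⟩ := Finset.mem_image.mp hp
        simp [SimpleGraph.dist_self]
      have hinj : ∀ a ∈ sX, ∀ b ∈ sX, (a, f a) = (b, f b) → a = b :=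
        fun a _ b _ h => congrArg Prod.fst h
      rw [hz1, zero_add, Finset.sum_image hinj]
      have hterm : ∀ a ∈ sX, (G.dist a (f a) : ℝ) * π a (f a) = (2 * (n : ℝ) + 1) * m := by
        intro a haa
        have hd : G.dist a (f a) = 2 * n + 1 :=
          sph_dist hc ha hXY ((hmemX a).mp haa) ((hmemY (f a)).mp (hfmem a haa))
        have hπa : π a (f a) = m :=
          hev2 a (f a) (by rintro ⟨h1, -⟩; exact hfne a haa h1.symm) ⟨haa, rfl⟩
        rw [hd, hπa]
        push_cast
        ring
      rw [Finset.sum_congr rfl hterm, Finset.sum_const, hsXcard, nsmul_eq_mul]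
      push_cast
      ring
  · -- lower bound
    rintro c ⟨π', hpos', hfin', hrow', hcol', rfl⟩
    set T' := hfin'.toFinset with hT'
    set s : Finset V := T'.image Prod.fst ∪ T'.image Prod.snd with hs
    have hmemsupp : ∀ v w, π' v w ≠ 0 → v ∈ s ∧ w ∈ s := by
      intro v w h
      have hmem : (v, w) ∈ T' := by rw [hT', Set.Finite.mem_toFinset]; exact h
      exact ⟨Finset.mem_union_left _ (Finset.mem_image.mpr ⟨(v, w), hmem, rfl⟩),
        Finset.mem_union_right _ (Finset.mem_image.mpr ⟨(v, w), hmem, rfl⟩)⟩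
    have hc1 : ∑ᶠ p : V × V, (G.dist p.1 p.2 : ℝ) * π' p.1 p.2
        = ∑ p ∈ s ×ˢ s, (G.dist p.1 p.2 : ℝ) * π' p.1 p.2 := by
      apply finsum_eq_sum_of_support_subset
      intro p hp
      simp only [Function.mem_support] at hp
      have hp' : π' p.1 p.2 ≠ 0 := fun h0 => hp (by rw [h0, mul_zero])
      obtain ⟨h1, h2⟩ := hmemsupp _ _ hp'
      simp only [Finset.coe_product, Set.mem_prod, Finset.mem_coe]
      exact ⟨h1, h2⟩
    have hrow_s : ∀ v, ∑ w ∈ s, π' v w = ballMeasure G q n X v := by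
      intro v
      rw [← hrow' v]
      symm
      apply finsum_eq_sum_of_support_subset
      intro w hw
      simp only [Function.mem_support] at hw
      exact (hmemsupp v w hw).2
    have hcol_s : ∀ w, ∑ v ∈ s, π' v w = ballMeasure G q n Y w := by
      intro w
      rw [← hcol' w]
      symm
      apply finsum_eq_sum_of_support_subset
      intro v hv
      simp only [Function.mem_support] at hv
      exact (hmemsupp v w hv).1
    rw [hc1]
    have hsum1 : ∑ p ∈ s ×ˢ s, ((pot G X Y p.1 : ℝ) - (pot G X Y p.2 : ℝ)) * π' p.1 p.2
        ≤ ∑ p ∈ s ×ˢ s, (G.dist p.1 p.2 : ℝ) * π' p.1 p.2 := by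
      apply Finset.sum_le_sum
      intro p _
      apply mul_le_mul_of_nonneg_right _ (hpos' p.1 p.2)
      have hpd := pot_dist_bound hc ha hXY p.1 p.2
      push_cast at hpd ⊢
      exact_mod_cast hpd
    have hsum2 : ∑ p ∈ s ×ˢ s, ((pot G X Y p.1 : ℝ) - (pot G X Y p.2 : ℝ)) * π' p.1 p.2
        = ∑ v ∈ s, (pot G X Y v : ℝ) * ballMeasure G q n X v
          - ∑ w ∈ s, (pot G X Y w : ℝ) * ballMeasure G q n Y w := by
      rw [Finset.sum_product]
      have hstep : ∀ v ∈ s, ∑ w ∈ s, ((pot G X Y v : ℝ) - (pot G X Y w : ℝ)) * π' v w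
          = (pot G X Y v : ℝ) * (∑ w ∈ s, π' v w) - ∑ w ∈ s, (pot G X Y w : ℝ) * π' v w := by
        intro v _
        rw [Finset.mul_sum, ← Finset.sum_sub_distrib]
        apply Finset.sum_congr rfl
        intros
        ring
      rw [Finset.sum_congr rfl hstep, Finset.sum_sub_distrib]
      congr 1
      · exact Finset.sum_congr rfl fun v _ => by rw [hrow_s v]
      · rw [Finset.sum_comm]
        exact Finset.sum_congr rfl fun w _ => by rw [← Finset.mul_sum, hcol_s w]
    -- evaluate the potential sums
    have hBXsub : BX ⊆ s := by
      intro v hv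
      have hμ : ballMeasure G q n X v ≠ 0 := by
        rw [hball, if_pos ((hmemBX v).mp hv)]
        exact hm_pos.ne'
      have hrne : ∑ᶠ w, π' v w ≠ 0 := by rw [hrow' v]; exact hμ
      obtain ⟨w, hw⟩ : ∃ w, π' v w ≠ 0 := by
        by_contra hall
        push_neg at hall
        exact hrne (by simp [hall])
      exact (hmemsupp v w hw).1
    have hBYsub : BY ⊆ s := by
      intro w hw
      have hμ : ballMeasure G q n Y w ≠ 0 := by
        rw [hball, if_pos ((hmemBY w).mp hw)]
        exact hm_pos.ne'
      have hrne : ∑ᶠ v, π' v w ≠ 0 := by rw [hcol' w]; exact hμ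
      obtain ⟨v, hv⟩ : ∃ v, π' v w ≠ 0 := by
        by_contra hall
        push_neg at hall
        exact hrne (by simp [hall])
      exact (hmemsupp v w hv).2
    have hXs : ∑ v ∈ s, (pot G X Y v : ℝ) * ballMeasure G q n X v
        = ∑ v ∈ BX, (pot G X Y v : ℝ) * m := by
      rw [← Finset.sum_subset hBXsub (fun x _ hx => by
        rw [hball, if_neg (fun hle => hx ((hmemBX x).mpr hle)), mul_zero])]
      exact Finset.sum_congr rfl fun v hv => by
        rw [hball, if_pos ((hmemBX v).mp hv)]
    have hYs : ∑ w ∈ s, (pot G X Y w : ℝ) * ballMeasure G q n Y w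
        = ∑ w ∈ BY, (pot G X Y w : ℝ) * m := by
      rw [← Finset.sum_subset hBYsub (fun x _ hx => by
        rw [hball, if_neg (fun hle => hx ((hmemBY x).mpr hle)), mul_zero])]
      exact Finset.sum_congr rfl fun w hw => by
        rw [hball, if_pos ((hmemBY w).mp hw)]
    -- split off the symmetric differences
    have hBXdiff : BX \ BY = sX := by
      have := ball_diff hc ha hXY n
      ext v
      rw [Finset.mem_sdiff, hmemBX, hmemBY, hmemX]
      constructor
      · rintro ⟨h1, h2⟩
        exact Set.ext_iff.mp this v |>.mp ⟨h1, h2⟩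
      · intro hvv
        exact Set.ext_iff.mp this v |>.mpr hvv
    have hBYdiff : BY \ BX = sY := by
      have := ball_diff hc ha hXY.symm n
      ext v
      rw [Finset.mem_sdiff, hmemBX, hmemBY, hmemY]
      constructor
      · rintro ⟨h1, h2⟩
        exact Set.ext_iff.mp this v |>.mp ⟨h1, h2⟩
      · intro hvv
        exact Set.ext_iff.mp this v |>.mpr hvv
    have hsplitX : ∑ v ∈ BX, (pot G X Y v : ℝ) * m
        = ∑ v ∈ BX ∩ BY, (pot G X Y v : ℝ) * m + ∑ v ∈ sX, (pot G X Y v : ℝ) * m := by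
      rw [← hBXdiff, Finset.sum_inter_add_sum_sdiff]
    have hsplitY : ∑ v ∈ BY, (pot G X Y v : ℝ) * m
        = ∑ v ∈ BX ∩ BY, (pot G X Y v : ℝ) * m + ∑ v ∈ sY, (pot G X Y v : ℝ) * m := by
      rw [← hBYdiff, Finset.inter_comm, ← Finset.sum_inter_add_sum_sdiff BY BX
        (fun v => (pot G X Y v : ℝ) * m), Finset.inter_comm]
    have hpotX : ∀ v ∈ sX, (pot G X Y v : ℝ) = (n : ℝ) := by
      intro v hv
      obtain ⟨h1, h2⟩ := (hmemX v).mp hv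
      rw [pot, if_pos (by omega), h1]
      norm_cast
    have hpotY : ∀ v ∈ sY, (pot G X Y v : ℝ) = -(1 + (n : ℝ)) := by
      intro v hv
      obtain ⟨h1, h2⟩ := (hmemY v).mp hv
      rw [pot, if_neg (by omega), h1]
      push_cast
      ring
    have hvalX : ∑ v ∈ sX, (pot G X Y v : ℝ) * m = (q ^ n : ℝ) * ((n : ℝ) * m) := by
      rw [Finset.sum_congr rfl fun v hv => by rw [hpotX v hv], Finset.sum_const, hsXcard,
        nsmul_eq_mul]
      push_cast
      ring
    have hvalY : ∑ v ∈ sY, (pot G X Y v : ℝ) * m = (q ^ n : ℝ) * (-(1 + (n : ℝ)) * m) := by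
      rw [Finset.sum_congr rfl fun v hv => by rw [hpotY v hv], Finset.sum_const, hsYcard,
        nsmul_eq_mul]
      push_cast
      ring
    have hfinal : ∑ v ∈ s, (pot G X Y v : ℝ) * ballMeasure G q n X v
        - ∑ w ∈ s, (pot G X Y w : ℝ) * ballMeasure G q n Y w
        = m * (q : ℝ) ^ n * (2 * (n : ℝ) + 1) := by
      rw [hXs, hYs, hsplitX, hsplitY, hvalX, hvalY]
      ring
    calc m * (q : ℝ) ^ n * (2 * (n : ℝ) + 1)
        = ∑ p ∈ s ×ˢ s, ((pot G X Y p.1 : ℝ) - (pot G X Y p.2 : ℝ)) * π' p.1 p.2 := by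
          rw [hsum2, hfinal]
      _ ≤ ∑ p ∈ s ×ˢ s, (G.dist p.1 p.2 : ℝ) * π' p.1 p.2 := hsum1
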